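/- Let f be a boolean function with min{bs_0(f), bs_1(f)} ≥ 2. Then for every k ≥ 1, min{bs_0(f^(k)), bs_1(f^(k))} ≥ 2^k. In particular, min{bs_0(f^(k)), bs_1(f^(k))} tends to infinity as k → ∞. -/

import Mathlib

/-!
If `f(x) = b` with `m` disjoint blocks `B_t`, and `g(y_c) = c` with `l` disjoint blocks `C_{c,s}`
for both values `c`, then `f ∘ g` has value `b` at the input whose `i`-th row is `y_{x_i}`, with the
`m l` disjoint blocks `D_{t,s} = ⋃_{i ∈ B_t} {i} × C_{x_i, s}`: flipping `D_{t,s}` negates exactly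
the rows `i ∈ B_t`, so it moves the outer input from `x` to `x ⊕ B_t`. Along
`f^(k+1) = f ∘ f^(k)` the number of disjoint blocks is thus multiplied by `m` at every level.
-/

open Filter

namespace BS

variable {I : Type*} [Fintype I] [DecidableEq I]

/-- Flip the bits of `x` indexed by `B`. -/
def flipSet (x : I → Bool) (B : Finset I) : I → Bool :=
  fun i => if i ∈ B then !(x i) else x i

/-- `B` is a block of `f` at `x`. -/
def IsBlock (f : (I → Bool) → Bool) (x : I → Bool) (B : Finset I) : Prop :=
  f (flipSet x B) ≠ f x

/-- Block sensitivity of `f` at `x`: the maximum number of pairwise disjoint blocks. -/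
noncomputable def bsAt (f : (I → Bool) → Bool) (x : I → Bool) : ℕ :=
  sSup {k | ∃ B : Fin k → Finset I, (∀ t, IsBlock f x (B t)) ∧
    ∀ t t', t ≠ t' → Disjoint (B t) (B t')}

/-- Block sensitivity of `f`. -/
noncomputable def bs (f : (I → Bool) → Bool) : ℕ :=
  sSup {k | ∃ x, k = bsAt f x}

/-- `b`-block sensitivity of `f`. -/
noncomputable def bsb (f : (I → Bool) → Bool) (b : Bool) : ℕ :=
  sSup {k | ∃ x, f x = b ∧ k = bsAt f x}

/-- `M`-fold block sensitivity of `f` at `x`. -/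
noncomputable def bsMAt (f : (I → Bool) → Bool) (M : ℕ) (x : I → Bool) : ℕ :=
  sSup {k | ∃ B : Fin k → Finset I, (∀ t, IsBlock f x (B t)) ∧
    ∀ i : I, (Finset.univ.filter (fun t => i ∈ B t)).card ≤ M}

/-- `M`-fold `b`-block sensitivity of `f`. -/
noncomputable def bsMb (f : (I → Bool) → Bool) (M : ℕ) (b : Bool) : ℕ :=
  sSup {k | ∃ x, f x = b ∧ k = bsMAt f M x}

/-- Fractional block sensitivity of `f` at `x`. -/
noncomputable def fbsAt (f : (I → Bool) → Bool) (x : I → Bool) : ℝ :=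
  sSup {s | ∃ lam : Finset I → ℝ, (∀ B, 0 ≤ lam B) ∧
    (∀ B, ¬ IsBlock f x B → lam B = 0) ∧
    (∀ i : I, ∑ B ∈ Finset.univ.filter (fun B : Finset I => i ∈ B), lam B ≤ 1) ∧
    s = ∑ B : Finset I, lam B}

/-- Fractional block sensitivity of `f`. -/
noncomputable def fbs (f : (I → Bool) → Bool) : ℝ :=
  sSup {s | ∃ x, s = fbsAt f x}

/-- Fractional `b`-block sensitivity of `f`. -/
noncomputable def fbsb (f : (I → Bool) → Bool) (b : Bool) : ℝ :=
  sSup {s | ∃ x, f x = b ∧ s = fbsAt f x}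

/-- Certificate complexity of `f` at `x`. -/
noncomputable def CAt (f : (I → Bool) → Bool) (x : I → Bool) : ℕ :=
  sInf {k | ∃ S : Finset I, (∀ B, IsBlock f x B → (S ∩ B).Nonempty) ∧ k = S.card}

/-- Certificate complexity of `f`. -/
noncomputable def Cm (f : (I → Bool) → Bool) : ℕ :=
  sSup {k | ∃ x, k = CAt f x}

/-- `b`-certificate complexity of `f`. -/
noncomputable def Cb (f : (I → Bool) → Bool) (b : Bool) : ℕ :=
  sSup {k | ∃ x, f x = b ∧ k = CAt f x}

/-- Fractional certificate complexity of `f` at `x`. -/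
noncomputable def fCAt (f : (I → Bool) → Bool) (x : I → Bool) : ℝ :=
  sInf {s | ∃ w : I → ℝ, (∀ i, 0 ≤ w i ∧ w i ≤ 1) ∧
    (∀ B, IsBlock f x B → 1 ≤ ∑ i ∈ B, w i) ∧ s = ∑ i, w i}

/-- Fractional certificate complexity of `f`. -/
noncomputable def fC (f : (I → Bool) → Bool) : ℝ :=
  sSup {s | ∃ x, s = fCAt f x}

/-- Composition `f ∘ g` of boolean functions. -/
def comp {J : Type*} [Fintype J] [DecidableEq J]
    (f : (I → Bool) → Bool) (g : (J → Bool) → Bool) :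
    ((I × J) → Bool) → Bool :=
  fun x => f (fun i => g (fun j => x (i, j)))

/-- `k`-fold iterated composition `f^(k)` of an `n`-variate boolean function; the
variables of `f^(k)` are indexed by strings in `Fin k → Fin n`.  `f^(0)` is the
univariate identity function. -/
def iter {n : ℕ} (f : (Fin n → Bool) → Bool) :
    (k : ℕ) → ((Fin k → Fin n) → Bool) → Bool
  | 0, x => x (fun i => i.elim0)
  | k + 1, x => f (fun i => iter f k (fun s => x (Fin.cons i s)))

/-- Spectral radius of a real square matrix: the maximum of `|μ|` over the complex
eigenvalues `μ` of the matrix. -/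
noncomputable def specRad {m : Type*} [Fintype m] [DecidableEq m]
    (A : Matrix m m ℝ) : ℝ :=
  sSup {r | ∃ μ : ℂ, μ ∈ spectrum ℂ (A.map Complex.ofReal) ∧ r = ‖μ‖}

end BS

namespace BS

open Function

section Blocks

variable {I J : Type*} [DecidableEq I] [DecidableEq J]

def HasDisjointBlocks (f : (I → Bool) → Bool) (x : I → Bool) (m : ℕ) : Prop :=
  ∃ B : Fin m → Finset I, (∀ t, IsBlock f x (B t)) ∧ Pairwise (Disjoint on B)

lemma bsAt_eq_sSup (f : (I → Bool) → Bool) (x : I → Bool) :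
    bsAt f x = sSup {m | HasDisjointBlocks f x m} :=
  rfl

@[simp]
lemma flipSet_empty (x : I → Bool) : flipSet x ∅ = x := by
  funext i
  simp [flipSet]

lemma IsBlock.nonempty {f : (I → Bool) → Bool} {x : I → Bool} {B : Finset I}
    (h : IsBlock f x B) : B.Nonempty := by
  rw [Finset.nonempty_iff_ne_empty]
  rintro rfl
  exact h (by rw [flipSet_empty])

lemma flipSet_map_equiv_comp (e : J ≃ I) (x : I → Bool) (B : Finset J) :
    flipSet x (B.map e.toEmbedding) ∘ e = flipSet (x ∘ e) B := by
  funext j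
  simp [flipSet]

namespace HasDisjointBlocks

variable {f : (I → Bool) → Bool} {x : I → Bool} {m : ℕ}

lemma mono {m' : ℕ} (h : HasDisjointBlocks f x m) (hm : m' ≤ m) :
    HasDisjointBlocks f x m' := by
  obtain ⟨B, hB, hD⟩ := h
  exact ⟨B ∘ Fin.castLE hm, fun t => hB _, hD.comp_of_injective (Fin.castLE_injective hm)⟩

lemma le_card [Fintype I] (h : HasDisjointBlocks f x m) : m ≤ Fintype.card I := by
  obtain ⟨B, hB, hD⟩ := h
  choose i hi using fun t => (hB t).nonempty
  have hinj : Injective i := fun t t' he =>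
    by_contra fun hne => Finset.disjoint_left.mp (hD hne) (hi t) (he ▸ hi t')
  simpa using Fintype.card_le_of_injective i hinj

theorem comp_equiv {F : (J → Bool) → Bool} {x : J → Bool} {m : ℕ}
    (h : HasDisjointBlocks F x m) (e : J ≃ I) :
    HasDisjointBlocks (fun w => F (w ∘ e)) (x ∘ e.symm) m := by
  obtain ⟨B, hB, hD⟩ := h
  refine ⟨fun t => (B t).map e.toEmbedding, fun t => ?_, fun t t' hne => ?_⟩
  · simpa [IsBlock, flipSet_map_equiv_comp, comp_assoc] using hB t
  · exact (Finset.disjoint_map _).mpr (hD hne)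

end HasDisjointBlocks

variable [Fintype I] {f : (I → Bool) → Bool}

lemma le_bsAt_iff {x : I → Bool} {m : ℕ} : m ≤ bsAt f x ↔ HasDisjointBlocks f x m := by
  have hbdd : BddAbove {k | HasDisjointBlocks f x k} :=
    ⟨Fintype.card I, fun _ => HasDisjointBlocks.le_card⟩
  have hzero : HasDisjointBlocks f x 0 := ⟨Fin.elim0, fun t => t.elim0, fun t => t.elim0⟩
  rw [bsAt_eq_sSup]
  exact ⟨fun hm => (Nat.sSup_mem ⟨0, hzero⟩ hbdd).mono hm, fun h => le_csSup hbdd h⟩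

lemma bsAt_le_card (x : I → Bool) : bsAt f x ≤ Fintype.card I :=
  (le_bsAt_iff.mp le_rfl).le_card

lemma le_bsb_iff {b : Bool} {m : ℕ} (hm : 0 < m) :
    m ≤ bsb f b ↔ ∃ x, f x = b ∧ HasDisjointBlocks f x m := by
  have hbdd : BddAbove {k | ∃ x, f x = b ∧ k = bsAt f x} :=
    ⟨Fintype.card I, by rintro _ ⟨x, -, rfl⟩; exact bsAt_le_card x⟩
  constructor
  · intro hle
    have hne : {k | ∃ x, f x = b ∧ k = bsAt f x}.Nonempty := by
      by_contra hempty
      rw [Set.not_nonempty_iff_eq_empty] at hempty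
      simp only [bsb, hempty, csSup_empty, bot_eq_zero] at hle
      omega
    obtain ⟨x, hx, hmax⟩ := Nat.sSup_mem hne hbdd
    exact ⟨x, hx, le_bsAt_iff.mp (hmax ▸ hle)⟩
  · rintro ⟨x, hx, h⟩
    exact (le_bsAt_iff.mpr h).trans (le_csSup hbdd ⟨x, hx, rfl⟩)

end Blocks

section Composition

variable {I J : Type*} [Fintype J] [DecidableEq J]
  {f : (I → Bool) → Bool} {g : (J → Bool) → Bool} {y : Bool → J → Bool}

lemma comp_apply_of_leftInverse (hy : LeftInverse g y) (x : I → Bool) :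
    comp f g (fun p => y (x p.1) p.2) = f x := by
  simp [comp, hy _]

variable [Fintype I] [DecidableEq I]

def compBlock (x : I → Bool) (B : Finset I) (C : Bool → Finset J) : Finset (I × J) :=
  Finset.univ.filter fun p => p.1 ∈ B ∧ p.2 ∈ C (x p.1)

lemma disjoint_compBlock {x : I → Bool} {B B' : Finset I} {C C' : Bool → Finset J}
    (h : Disjoint B B' ∨ ∀ c, Disjoint (C c) (C' c)) :
    Disjoint (compBlock x B C) (compBlock x B' C') := by
  rw [Finset.disjoint_left]
  rintro ⟨i, j⟩ hp hp'
  simp only [compBlock, Finset.mem_filter, Finset.mem_univ, true_and] at hp hp'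
  rcases h with hB | hC
  · exact Finset.disjoint_left.mp hB hp.1 hp'.1
  · exact Finset.disjoint_left.mp (hC (x i)) hp.2 hp'.2

lemma comp_flipSet_compBlock (hy : LeftInverse g y) {C : Bool → Finset J}
    (hC : ∀ c, IsBlock g (y c) (C c)) (x : I → Bool) (B : Finset I) :
    comp f g (flipSet (fun p => y (x p.1) p.2) (compBlock x B C)) = f (flipSet x B) := by
  have hflip : ∀ c, g (flipSet (y c) (C c)) = !c := fun c => by
    have h := hC c
    rwa [IsBlock, hy, ← Bool.eq_not_iff] at h
  unfold comp
  congr 1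
  funext i
  by_cases hi : i ∈ B
  · have hrow : (fun j => flipSet (fun p => y (x p.1) p.2) (compBlock x B C) (i, j)) =
        flipSet (y (x i)) (C (x i)) := by
      funext j
      simp [flipSet, compBlock, hi]
    rw [hrow, hflip]
    simp [flipSet, hi]
  · have hrow : (fun j => flipSet (fun p => y (x p.1) p.2) (compBlock x B C) (i, j)) =
        y (x i) := by
      funext j
      simp [flipSet, compBlock, hi]
    rw [hrow, hy]
    simp [flipSet, hi]

lemma isBlock_comp_compBlock (hy : LeftInverse g y) {x : I → Bool} {B : Finset I}
    (hB : IsBlock f x B) {C : Bool → Finset J} (hC : ∀ c, IsBlock g (y c) (C c)) :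
    IsBlock (comp f g) (fun p => y (x p.1) p.2) (compBlock x B C) := by
  rwa [IsBlock, comp_flipSet_compBlock hy hC, comp_apply_of_leftInverse hy]

theorem HasDisjointBlocks.comp {x : I → Bool} {m l : ℕ} (hx : HasDisjointBlocks f x m)
    (hy : LeftInverse g y) (hyl : ∀ c, HasDisjointBlocks g (y c) l) :
    HasDisjointBlocks (comp f g) (fun p => y (x p.1) p.2) (m * l) := by
  obtain ⟨B, hB, hBd⟩ := hx
  choose C hC hCd using hyl
  let D : Fin m × Fin l → Finset (I × J) := fun ts => compBlock x (B ts.1) (C · ts.2)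
  have hD : Pairwise (Disjoint on D) := by
    rintro ⟨t, s⟩ ⟨t', s'⟩ hne
    by_cases ht : t = t'
    · subst ht
      exact disjoint_compBlock (Or.inr fun c => hCd c fun hs : s = s' => hne (hs ▸ rfl))
    · exact disjoint_compBlock (Or.inl (hBd ht))
  refine ⟨D ∘ finProdFinEquiv.symm, fun r => ?_,
    hD.comp_of_injective finProdFinEquiv.symm.injective⟩
  exact isBlock_comp_compBlock hy (hB _) (hC · _)

end Composition

section Iteration

variable {n m : ℕ} {f : (Fin n → Bool) → Bool}

lemma iter_succ_eq_comp (k : ℕ) (w : (Fin (k + 1) → Fin n) → Bool) :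
    iter f (k + 1) w = comp f (iter f k) (w ∘ Fin.consEquiv fun _ => Fin n) :=
  rfl

lemma hasDisjointBlocks_iter_zero (x : (Fin 0 → Fin n) → Bool) :
    HasDisjointBlocks (iter f 0) x 1 := by
  refine ⟨fun _ => Finset.univ, fun _ => ?_, Subsingleton.pairwise⟩
  simp only [IsBlock, iter, flipSet, Finset.mem_univ, if_true]
  exact Bool.not_ne_self _

theorem exists_iter_eq_and_hasDisjointBlocks
    (hf : ∀ b, ∃ x, f x = b ∧ HasDisjointBlocks f x m) (k : ℕ) (b : Bool) :
    ∃ x, iter f k x = b ∧ HasDisjointBlocks (iter f k) x (m ^ k) := by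
  induction k generalizing b with
  | zero => exact ⟨fun _ => b, rfl, by rw [pow_zero]; exact hasDisjointBlocks_iter_zero _⟩
  | succ k ih =>
    obtain ⟨x, hx, hxm⟩ := hf b
    choose y hy hym using ih
    let e := Fin.consEquiv fun _ : Fin (k + 1) => Fin n
    refine ⟨(fun p => y (x p.1) p.2) ∘ e.symm, ?_, ?_⟩
    · rw [iter_succ_eq_comp, comp_assoc, e.symm_comp_self, comp_id,
        comp_apply_of_leftInverse hy, hx]
    · rw [pow_succ']
      exact (hxm.comp hy hym).comp_equiv e

theorem pow_le_bsb_iter (hm : 0 < m) (hf : ∀ b, m ≤ bsb f b) (k : ℕ) (b : Bool) :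
    m ^ k ≤ bsb (iter f k) b := by
  obtain ⟨x, hx, hxm⟩ :=
    exists_iter_eq_and_hasDisjointBlocks (fun c => (le_bsb_iff hm).mp (hf c)) k b
  exact (le_bsb_iff (pow_pos hm k)).mpr ⟨x, hx, hxm⟩

end Iteration

end BS

open Filter BS in
/-- If `min{bs_0(f), bs_1(f)} ≥ 2`, then for every `k ≥ 1`,
`min{bs_0(f^(k)), bs_1(f^(k))} ≥ 2^k`; in particular this minimum tends to
infinity as `k → ∞`. -/
theorem bs_min_ge_two_pow {n : ℕ} (f : (Fin n → Bool) → Bool)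
    (h : 2 ≤ min (bsb f false) (bsb f true)) :
    (∀ k : ℕ, 1 ≤ k →
        2 ^ k ≤ min (bsb (iter f k) false) (bsb (iter f k) true)) ∧
      Filter.Tendsto (fun k : ℕ => min (bsb (iter f k) false) (bsb (iter f k) true))
        Filter.atTop Filter.atTop := by
  have hf : ∀ b, 2 ≤ bsb f b := Bool.forall_bool.mpr (le_min_iff.mp h)
  have hpow : ∀ k, 2 ^ k ≤ min (bsb (iter f k) false) (bsb (iter f k) true) := fun k =>
    le_min (pow_le_bsb_iter two_pos hf k false) (pow_le_bsb_iter two_pos hf k true)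
  exact ⟨fun k _ => hpow k,
    tendsto_atTop_mono hpow (tendsto_pow_atTop_atTop_of_one_lt one_lt_two)⟩
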